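/- Let Y be a closed subspace of a Banach space X. If for every nonempty closed bounded F ⊆ X and every ε > 0 there exists δ > 0 with cent_{B_Y}(F,δ) ⊆ cent_{B_Y}(F) + εB_X (i.e., (X, B_Y, CB(X)) has property-(P₁)), then the same holds with Y in place of B_Y: for every nonempty closed bounded F ⊆ X and ε > 0 there is δ > 0 with cent_Y(F,δ) ⊆ cent_Y(F) + εB_X. -/

import Mathlib

/-! Chebyshev radii and centres are compatible with dilations, `rad_{cV}(cF) = |c| rad_V(F)`, so
property (P₁) is invariant under scaling. For `b ∈ F`, `cent_Y(F,1)` lies in the ball of radius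
`M = rad_Y(F) + 1 + ‖b‖`; hence shrinking `Y` to
`Y ∩ M B_X = M • B_Y` changes neither the radius nor the δ-centres for `δ ≤ 1`, and (P₁) for
`(B_Y, M⁻¹ F)` rescales to (P₁) for `(Y, F)`. -/

open Metric Set Pointwise

/-- `r(x,B) = sup_{b ∈ B} ‖x - b‖`. -/
noncomputable def chebR {X : Type*} [NormedAddCommGroup X] (x : X) (B : Set X) : ℝ :=
  ⨆ b : B, ‖x - (b : X)‖

/-- `rad_V(B) = inf_{v ∈ V} r(v,B)`, the restricted Chebyshev radius. -/
noncomputable def chebRad {X : Type*} [NormedAddCommGroup X] (V B : Set X) : ℝ :=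
  ⨅ v : V, chebR (v : X) B

/-- `cent_V(B)`, the set of restricted Chebyshev centers of `B` w.r.t. `V`. -/
noncomputable def chebCent {X : Type*} [NormedAddCommGroup X] (V B : Set X) : Set X :=
  {v ∈ V | chebR v B ≤ chebRad V B}

/-- `cent_V(B,δ) = {v ∈ V : r(v,B) ≤ rad_V(B) + δ}`. -/
noncomputable def chebCentA {X : Type*} [NormedAddCommGroup X] (V B : Set X) (δ : ℝ) : Set X :=
  {v ∈ V | chebR v B ≤ chebRad V B + δ}

/-- Property-(P₁) of `(X,V,{F})`: nonemptiness of `cent_V(F)` together with the ε-δ containment. -/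
def propP1 {X : Type*} [NormedAddCommGroup X] [NormedSpace ℝ X] (V F : Set X) : Prop :=
  (chebCent V F).Nonempty ∧
    ∀ ε > (0 : ℝ), ∃ δ > (0 : ℝ), chebCentA V F δ ⊆ chebCent V F + ε • closedBall (0 : X) 1

section SmulSet

variable {α β γ : Type*} [SMul α β] (c : α) (s : Set β) (f : β → γ)

lemma iSup_smul_set [SupSet γ] : ⨆ y : (c • s : Set β), f y = ⨆ x : s, f (c • (x : β)) :=
  (Set.imageFactorization_surjective.iSup_comp (fun y : (c • ·) '' s => f y)).symm

lemma iInf_smul_set [InfSet γ] : ⨅ y : (c • s : Set β), f y = ⨅ x : s, f (c • (x : β)) :=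
  (Set.imageFactorization_surjective.iInf_comp (fun y : (c • ·) '' s => f y)).symm

end SmulSet

lemma Submodule.smul_coe_eq_self {R M : Type*} [DivisionRing R] [AddCommGroup M] [Module R M]
    (p : Submodule R M) {c : R} (hc : c ≠ 0) : c • (p : Set M) = p := by
  ext x
  rw [Set.mem_smul_set_iff_inv_smul_mem₀ hc, SetLike.mem_coe, SetLike.mem_coe,
    p.smul_mem_iff (inv_ne_zero hc)]

section Chebyshev

variable {X : Type*} [NormedAddCommGroup X]

lemma chebR_nonneg (x : X) (B : Set X) : 0 ≤ chebR x B :=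
  Real.iSup_nonneg fun _ => norm_nonneg _

lemma norm_sub_le_chebR {B : Set X} (hB : Bornology.IsBounded B) {b : X} (hb : b ∈ B) (x : X) :
    ‖x - b‖ ≤ chebR x B := by
  refine le_ciSup (f := fun b : B => ‖x - (b : X)‖) ?_ ⟨b, hb⟩
  obtain ⟨C, hC⟩ := hB.exists_norm_le
  refine ⟨‖x‖ + C, ?_⟩
  rintro _ ⟨b', rfl⟩
  linarith [norm_sub_le x b', hC b' b'.2]

lemma chebRad_nonneg (V B : Set X) : 0 ≤ chebRad V B :=
  Real.iInf_nonneg fun _ => chebR_nonneg _ _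

lemma chebRad_le {V : Set X} (B : Set X) {v : X} (hv : v ∈ V) : chebRad V B ≤ chebR v B :=
  ciInf_le ⟨0, by rintro _ ⟨w, rfl⟩; exact chebR_nonneg _ _⟩ (⟨v, hv⟩ : V)

lemma exists_chebR_lt {V : Set X} (hV : V.Nonempty) (B : Set X) {δ : ℝ} (hδ : 0 < δ) :
    ∃ v ∈ V, chebR v B < chebRad V B + δ := by
  have := hV.to_subtype
  obtain ⟨⟨v, hv⟩, hlt⟩ := exists_lt_of_ciInf_lt (lt_add_of_pos_right (chebRad V B) hδ)
  exact ⟨v, hv, hlt⟩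

lemma chebCentA_zero (V B : Set X) : chebCentA V B 0 = chebCent V B := by
  simp [chebCentA, chebCent]

lemma chebCentA_mono (V B : Set X) {δ δ' : ℝ} (h : δ ≤ δ') : chebCentA V B δ ⊆ chebCentA V B δ' :=
  fun _ hv => ⟨hv.1, hv.2.trans (by linarith)⟩

lemma chebCentA_subset_closedBall {B : Set X} (hB : Bornology.IsBounded B) {b : X} (hb : b ∈ B)
    (V : Set X) (δ : ℝ) : chebCentA V B δ ⊆ closedBall 0 (chebRad V B + δ + ‖b‖) := by
  intro v hv
  rw [mem_closedBall_zero_iff]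
  linarith [hv.2, norm_sub_le_chebR hB hb v, norm_le_norm_sub_add v b]

section Smul

variable {𝕜 : Type*} [NormedField 𝕜] [NormedSpace 𝕜 X]

lemma chebR_smul (c : 𝕜) (x : X) (B : Set X) : chebR (c • x) (c • B) = ‖c‖ * chebR x B := by
  unfold chebR
  rw [iSup_smul_set c B (‖c • x - ·‖), Real.mul_iSup_of_nonneg (norm_nonneg c)]
  simp only [← smul_sub, norm_smul]

lemma chebRad_smul (c : 𝕜) (V B : Set X) : chebRad (c • V) (c • B) = ‖c‖ * chebRad V B := by
  unfold chebRad
  rw [iInf_smul_set c V (chebR · (c • B)), Real.mul_iInf_of_nonneg (norm_nonneg c)]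
  simp only [chebR_smul]

lemma chebCentA_smul {c : 𝕜} (hc : c ≠ 0) (V B : Set X) (δ : ℝ) :
    chebCentA (c • V) (c • B) (‖c‖ * δ) = c • chebCentA V B δ := by
  ext v
  simp only [chebCentA, Set.mem_smul_set, Set.mem_ofPred_eq]
  constructor
  · rintro ⟨⟨u, hu, rfl⟩, h⟩
    rw [chebR_smul, chebRad_smul, ← mul_add] at h
    exact ⟨u, ⟨hu, le_of_mul_le_mul_left h (norm_pos_iff.2 hc)⟩, rfl⟩
  · rintro ⟨u, ⟨hu, h⟩, rfl⟩
    refine ⟨⟨u, hu, rfl⟩, ?_⟩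
    rw [chebR_smul, chebRad_smul, ← mul_add]
    exact mul_le_mul_of_nonneg_left h (norm_nonneg c)

lemma chebCent_smul {c : 𝕜} (hc : c ≠ 0) (V B : Set X) :
    chebCent (c • V) (c • B) = c • chebCent V B := by
  rw [← chebCentA_zero, ← chebCentA_zero, ← chebCentA_smul hc, mul_zero]

end Smul

section Localization

variable {V W B : Set X} {δ₀ : ℝ} (hWV : W ⊆ V) (hV : V.Nonempty) (hδ₀ : 0 < δ₀)
  (hcent : chebCentA V B δ₀ ⊆ W)
include hWV hV hδ₀ hcent

lemma chebRad_eq_of_chebCentA_subset : chebRad W B = chebRad V B := by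
  apply le_antisymm
  · refine le_of_forall_pos_lt_add fun η hη => ?_
    obtain ⟨v, hv, hlt⟩ := exists_chebR_lt hV B (lt_min hδ₀ hη)
    have hvW : v ∈ W := hcent ⟨hv, hlt.le.trans (by gcongr; exact min_le_left _ _)⟩
    calc chebRad W B ≤ chebR v B := chebRad_le B hvW
      _ < chebRad V B + min δ₀ η := hlt
      _ ≤ chebRad V B + η := by gcongr; exact min_le_right _ _
  · obtain ⟨v, hv, hlt⟩ := exists_chebR_lt hV B hδ₀
    have : Nonempty W := ⟨v, hcent ⟨hv, hlt.le⟩⟩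
    exact le_ciInf fun w => chebRad_le B (hWV w.2)

lemma chebCentA_eq_of_chebCentA_subset {δ : ℝ} (hδ : δ ≤ δ₀) :
    chebCentA W B δ = chebCentA V B δ := by
  have hrad := chebRad_eq_of_chebCentA_subset hWV hV hδ₀ hcent
  ext v
  refine ⟨fun hv => ⟨hWV hv.1, hrad ▸ hv.2⟩, fun hv => ⟨hcent (chebCentA_mono V B hδ hv), ?_⟩⟩
  rw [hrad]
  exact hv.2

end Localization

end Chebyshev

section PropP1

variable {X : Type*} [NormedAddCommGroup X] [NormedSpace ℝ X]

lemma propP1.smul {V F : Set X} (h : propP1 V F) {c : ℝ} (hc : c ≠ 0) :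
    propP1 (c • V) (c • F) := by
  obtain ⟨hne, hP⟩ := h
  refine ⟨chebCent_smul hc V F ▸ hne.smul_set, fun ε hε => ?_⟩
  have hc' : 0 < ‖c‖ := norm_pos_iff.2 hc
  obtain ⟨δ, hδ, hsub⟩ := hP (ε / ‖c‖) (div_pos hε hc')
  refine ⟨‖c‖ * δ, mul_pos hc' hδ, ?_⟩
  rw [chebCentA_smul hc, chebCent_smul hc]
  calc c • chebCentA V F δ ⊆ c • (chebCent V F + (ε / ‖c‖) • closedBall 0 1) :=
        Set.smul_set_mono hsub
    _ = c • chebCent V F + ε • closedBall 0 1 := by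
        rw [smul_add, smul_smul, smul_unitClosedBall, smul_unitClosedBall, norm_mul, norm_div,
          norm_norm, mul_div_cancel₀ _ hc'.ne']

lemma propP1.of_chebCentA_subset {V W B : Set X} {δ₀ : ℝ} (hWV : W ⊆ V) (hV : V.Nonempty)
    (hδ₀ : 0 < δ₀) (hcent : chebCentA V B δ₀ ⊆ W) (h : propP1 W B) : propP1 V B := by
  have hcentA : ∀ δ ≤ δ₀, chebCentA W B δ = chebCentA V B δ :=
    fun _ => chebCentA_eq_of_chebCentA_subset hWV hV hδ₀ hcent
  have hcent0 : chebCent W B = chebCent V B := by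
    rw [← chebCentA_zero, ← chebCentA_zero, hcentA _ hδ₀.le]
  obtain ⟨hne, hP⟩ := h
  refine ⟨hcent0 ▸ hne, fun ε hε => ?_⟩
  obtain ⟨δ, hδ, hsub⟩ := hP ε hε
  refine ⟨min δ δ₀, lt_min hδ hδ₀, ?_⟩
  rw [← hcentA _ (min_le_right _ _), ← hcent0]
  exact (chebCentA_mono W B (min_le_left _ _)).trans hsub

end PropP1

theorem stmt_5_general {X : Type*} [NormedAddCommGroup X] [NormedSpace ℝ X]
    (Y : Submodule ℝ X)
    (hP1 : ∀ F : Set X, F.Nonempty → IsClosed F → Bornology.IsBounded F →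
      propP1 ((Y : Set X) ∩ closedBall 0 1) F) :
    ∀ F : Set X, F.Nonempty → IsClosed F → Bornology.IsBounded F →
      propP1 (Y : Set X) F := by
  intro F hFne hFcl hFb
  obtain ⟨b, hb⟩ := hFne
  set M := chebRad (Y : Set X) F + 1 + ‖b‖
  have hM : 0 < M := by have := chebRad_nonneg (Y : Set X) F; positivity
  have hball : M • ((Y : Set X) ∩ closedBall 0 1) = (Y : Set X) ∩ closedBall 0 M := by
    rw [Set.smul_set_inter₀ hM.ne', Y.smul_coe_eq_self hM.ne', smul_unitClosedBall_of_nonneg hM.le]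
  have hscaled := (hP1 (M⁻¹ • F) ⟨_, smul_mem_smul_set hb⟩
    (hFcl.smul_of_ne_zero (inv_ne_zero hM.ne')) (hFb.smul₀ _)).smul hM.ne'
  rw [hball, smul_inv_smul₀ hM.ne'] at hscaled
  exact hscaled.of_chebCentA_subset inter_subset_left ⟨0, Y.zero_mem⟩ one_pos
    (subset_inter (fun v hv => hv.1) (chebCentA_subset_closedBall hFb hb _ 1))

/-- if `(X, B_Y, CB(X))` has property-(P₁) then so does `(X, Y, CB(X))`. -/
theorem stmt_5 {X : Type*} [NormedAddCommGroup X] [NormedSpace ℝ X] [CompleteSpace X]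
    (Y : Submodule ℝ X) (hYc : IsClosed (Y : Set X))
    (hP1 : ∀ F : Set X, F.Nonempty → IsClosed F → Bornology.IsBounded F →
      propP1 ((Y : Set X) ∩ closedBall 0 1) F) :
    ∀ F : Set X, F.Nonempty → IsClosed F → Bornology.IsBounded F →
      propP1 (Y : Set X) F :=
  stmt_5_general Y hP1
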